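/- Let C ≥ 0 and suppose E ⊂ ℝ^{n+1} is a set of locally finite perimeter whose boundary T = ∂E is C-almost minimizing, i.e. for every bounded open W and every compactly supported integer multiplicity (n+1)-current X with support in W one has M_W(T) ≤ M_W(T + ∂X) + C·M_W(X). If moreover E is a vertical cylinder, E = E₀ × ℝ for a set E₀ ⊂ ℝⁿ of locally finite perimeter, then the boundary T₀ = ∂E₀ is C-almost minimizing in ℝⁿ. -/

import Mathlib

/-!
Write `x = (y, t) ∈ ℝⁿ × ℝ` and `E = E₀ × ℝ`. Lifting a test field `φ₀` of `E₀` in `W` to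
`(y, t) ↦ (χ(t) φ₀(y), 0)`, with a bump `χ` equal to `1` on `(-L, L)`, gives
`2L · Per(E₀; W) ≤ Per(E; W × (-L-1, L+1))`. Compare `E` with `F'`, which is `F₀ × (-L, L)`
inside the slab `|t| < L` and `E₀ × ℝ` outside it: `E Δ F' = (E₀ Δ F₀) × (-L, L)`, so almost
minimality gives `Per(E) ≤ Per(F') + 2L · C · |E₀ Δ F₀|`. Splitting the divergence of a test
field into its horizontal slices and the vertical derivative, `Per(F') ≤ 2L · Per(F₀; W) + O(1)`:
the slices over `|t| < L` see `F₀`, those over the two remaining unit intervals see `E₀`, and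
the vertical flux through the lids `t = ±L` only sees `E₀ Δ F₀`. Divide by `2L` and let `L → ∞`.
-/

open MeasureTheory Set Filter Metric

/-- The (Euclidean) divergence of a vector field on `ℝⁿ`. -/
noncomputable def divg {n : ℕ} (φ : EuclideanSpace ℝ (Fin n) → EuclideanSpace ℝ (Fin n))
    (x : EuclideanSpace ℝ (Fin n)) : ℝ :=
  ∑ i, fderiv ℝ φ x (EuclideanSpace.single i 1) i

/-- Admissible test vector fields for the variational definition of perimeter in `W`. -/
def TestField {n : ℕ} (W : Set (EuclideanSpace ℝ (Fin n)))
    (φ : EuclideanSpace ℝ (Fin n) → EuclideanSpace ℝ (Fin n)) : Prop :=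
  ContDiff ℝ 1 φ ∧ HasCompactSupport φ ∧ tsupport φ ⊆ W ∧ ∀ x, ‖φ x‖ ≤ 1

/-- The perimeter (total variation of the characteristic function) of `E` in `W`,
defined variationally by the Gauss–Green supremum. -/
noncomputable def Per {n : ℕ} (E W : Set (EuclideanSpace ℝ (Fin n))) : ℝ :=
  sSup {r : ℝ | ∃ φ, TestField W φ ∧ r = ∫ x in E, divg φ x}

/-- `E` has locally finite perimeter (is a Caccioppoli set). -/
def LocallyFinitePerimeter {n : ℕ} (E : Set (EuclideanSpace ℝ (Fin n))) : Prop :=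
  ∀ W : Set (EuclideanSpace ℝ (Fin n)), IsOpen W → Bornology.IsBounded W →
    BddAbove {r : ℝ | ∃ φ, TestField W φ ∧ r = ∫ x in E, divg φ x}

/-- The boundary of `E` is `C`-almost minimizing: for every bounded open `W` and every
competitor `F` with `E Δ F` compactly contained in `W`,
`Per(E; W) ≤ Per(F; W) + C·Leb(E Δ F)`. -/
def AlmostMinimizing {n : ℕ} (C : ℝ) (E : Set (EuclideanSpace ℝ (Fin n))) : Prop :=
  ∀ W : Set (EuclideanSpace ℝ (Fin n)), IsOpen W → Bornology.IsBounded W →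
    ∀ F : Set (EuclideanSpace ℝ (Fin n)),
      (∃ K, IsCompact K ∧ symmDiff E F ⊆ K ∧ K ⊆ W) →
      Per E W ≤ Per F W + C * (volume (symmDiff E F)).toReal

noncomputable section

local notation:max "ℝ^" n:max => EuclideanSpace ℝ (Fin n)

variable {n : ℕ}

lemma isClosedEmbedding_prodMk_left {X Y : Type*} [TopologicalSpace X] [TopologicalSpace Y]
    [T1Space Y] (y : Y) : Topology.IsClosedEmbedding fun x : X => (x, y) :=
  ⟨isEmbedding_prodMkLeft y, by
    convert isClosed_univ.prod (isClosed_singleton (x := y))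
    ext ⟨a, b⟩
    simp [eq_comm]⟩

lemma isClosedEmbedding_prodMk_right {X Y : Type*} [TopologicalSpace X] [TopologicalSpace Y]
    [T1Space X] (x : X) : Topology.IsClosedEmbedding (Prod.mk x : Y → X × Y) :=
  ⟨isEmbedding_prodMkRight x, by
    convert (isClosed_singleton (x := x)).prod (isClosed_univ (X := Y))
    ext ⟨a, b⟩
    simp [eq_comm]⟩

lemma setIntegral_le_mul_measureReal {α : Type*} [MeasurableSpace α] {μ : Measure α}
    {f : α → ℝ} {s t : Set α} {P : ℝ} (hs : MeasurableSet s) (ht : μ t ≠ ⊤)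
    (hP : ∀ x, |f x| ≤ P) (hf : ∀ x ∉ t, f x = 0) :
    ∫ x in s, f x ∂μ ≤ P * μ.real (s ∩ t) := by
  rw [setIntegral_eq_of_subset_of_forall_sdiff_eq_zero hs inter_subset_left
    fun x hx => hf x fun h => hx.2 ⟨hx.1, h⟩]
  refine (le_abs_self _).trans ((Real.norm_eq_abs _).symm.trans_le ?_)
  exact norm_setIntegral_le_of_norm_le_const ((measure_mono inter_subset_right).trans_lt ht.lt_top)
    fun x _ => (Real.norm_eq_abs _).trans_le (hP x)

lemma abs_setIntegral_sub_setIntegral_le {α : Type*} [MeasurableSpace α] {μ : Measure α}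
    {f : α → ℝ} {M : ℝ} {s t : Set α} (hf : Integrable f μ) (hM : ∀ x, |f x| ≤ M)
    (hst : μ (symmDiff s t) ≠ ⊤) :
    |∫ x in s, f x ∂μ - ∫ x in t, f x ∂μ| ≤ 2 * M * μ.real (symmDiff s t) := by
  rcases isEmpty_or_nonempty α with hα | ⟨⟨x₀⟩⟩
  · simp [Subsingleton.elim s t]
  have hM0 : 0 ≤ M := (abs_nonneg _).trans (hM x₀)
  -- `s`, `t` need not be measurable: cut both along a measurable hull `T` of `s Δ t`.
  set T := toMeasurable μ (symmDiff s t)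
  have hT : MeasurableSet T := measurableSet_toMeasurable _ _
  have hsT : s \ T = t \ T := by
    ext x
    have := subset_toMeasurable μ (symmDiff s t) (a := x)
    simp only [Set.mem_sdiff, mem_symmDiff] at this ⊢
    tauto
  have hbound : ∀ u, |∫ x in u ∩ T, f x ∂μ| ≤ M * μ.real (symmDiff s t) := fun u => by
    have hTfin : μ T < ⊤ := (measure_toMeasurable _).trans_lt hst.lt_top
    have := norm_setIntegral_le_of_norm_le_const (s := u ∩ T)
      ((measure_mono inter_subset_right).trans_lt hTfin)
      fun x _ => (Real.norm_eq_abs (f x)).trans_le (hM x)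
    refine (Real.norm_eq_abs _ ▸ this).trans (mul_le_mul_of_nonneg_left ?_ hM0)
    calc μ.real (u ∩ T) ≤ μ.real T := measureReal_mono inter_subset_right hTfin.ne
      _ = μ.real (symmDiff s t) := by simp only [measureReal_def, T, measure_toMeasurable]
  rw [← integral_inter_add_sdiff hT hf.integrableOn (s := s),
    ← integral_inter_add_sdiff hT hf.integrableOn (s := t), hsT]
  have hs := abs_le.1 (hbound s)
  have ht := abs_le.1 (hbound t)
  exact abs_le.2 ⟨by linarith, by linarith⟩

lemma le_of_forall_one_le_mul_le_mul_add {a b K : ℝ} (h : ∀ L : ℝ, 1 ≤ L → L * a ≤ L * b + K) :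
    a ≤ b := by
  by_contra! hba
  have hL := le_max_right 1 ((K + 1) / (a - b))
  rw [div_le_iff₀ (sub_pos.2 hba)] at hL
  nlinarith [h _ (le_max_left 1 ((K + 1) / (a - b)))]

def splitLast (n : ℕ) : ℝ^(n + 1) ≃L[ℝ] ℝ × ℝ^n :=
  LinearEquiv.toContinuousLinearEquiv
    { toFun := fun x => (x (Fin.last n), WithLp.toLp 2 fun i : Fin n => x i.castSucc)
      invFun := fun p => WithLp.toLp 2 (Fin.snoc p.2 p.1 : Fin (n + 1) → ℝ)
      map_add' := fun _ _ => rfl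
      map_smul' := fun _ _ => rfl
      left_inv := fun x => PiLp.ext fun j => Fin.lastCases (by simp) (fun i => by simp) j
      right_inv := fun p => Prod.ext (by simp) (PiLp.ext fun i => by simp) }

@[simp] lemma splitLast_fst (x : ℝ^(n + 1)) : (splitLast n x).1 = x (Fin.last n) := rfl

@[simp] lemma splitLast_snd_apply (x : ℝ^(n + 1)) (i : Fin n) :
    (splitLast n x).2 i = x i.castSucc := rfl

@[simp] lemma splitLast_symm_apply_last (p : ℝ × ℝ^n) :
    (splitLast n).symm p (Fin.last n) = p.1 :=
  Fin.snoc_last (α := fun _ => ℝ) _ _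

@[simp] lemma splitLast_symm_apply_castSucc (p : ℝ × ℝ^n) (i : Fin n) :
    (splitLast n).symm p i.castSucc = p.2 i :=
  Fin.snoc_castSucc (α := fun _ => ℝ) _ _ _

lemma splitLast_symm_one_zero :
    (splitLast n).symm (1, 0) = EuclideanSpace.single (Fin.last n) 1 :=
  PiLp.ext fun j => Fin.lastCases (by simp) (fun i => by simp [Fin.castSucc_ne_last]) j

lemma splitLast_symm_zero_single (i : Fin n) :
    (splitLast n).symm (0, EuclideanSpace.single i 1) = EuclideanSpace.single i.castSucc 1 :=
  PiLp.ext fun j => Fin.lastCases (by simp [(Fin.castSucc_ne_last i).symm])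
    (fun k => by simp [Fin.castSucc_inj]) j

lemma norm_splitLast_snd_le (x : ℝ^(n + 1)) : ‖(splitLast n x).2‖ ≤ ‖x‖ := by
  simp only [EuclideanSpace.norm_eq, Fin.sum_univ_castSucc (f := fun i => ‖x i‖ ^ 2)]
  exact Real.sqrt_le_sqrt (le_add_of_nonneg_right (sq_nonneg _))

lemma norm_splitLast_symm_zero (y : ℝ^n) : ‖(splitLast n).symm (0, y)‖ = ‖y‖ := by
  simp [EuclideanSpace.norm_eq, Fin.sum_univ_castSucc]

lemma measurePreserving_splitLast : MeasurePreserving (splitLast n) := by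
  convert ((MeasurePreserving.id volume).prod (PiLp.volume_preserving_toLp (Fin n))).comp
    ((volume_preserving_piFinSuccAbove (fun _ : Fin (n + 1) => ℝ) (Fin.last n)).comp
      (PiLp.volume_preserving_ofLp (Fin (n + 1)))) using 1
  · funext x
    exact Prod.ext rfl (PiLp.ext fun i => by simp [Fin.init])
  · exact Measure.volume_eq_prod _ _

lemma measurableEmbedding_splitLast : MeasurableEmbedding (splitLast n) :=
  (splitLast n).toHomeomorph.measurableEmbedding

lemma setIntegral_preimage_splitLast (f : ℝ^(n + 1) → ℝ) (S : Set (ℝ × ℝ^n)) :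
    ∫ x in splitLast n ⁻¹' S, f x = ∫ p in S, f ((splitLast n).symm p) := by
  simpa using measurePreserving_splitLast.setIntegral_preimage_emb measurableEmbedding_splitLast
    (fun p => f ((splitLast n).symm p)) S

def cyl (I : Set ℝ) (A : Set ℝ^n) : Set ℝ^(n + 1) := splitLast n ⁻¹' I ×ˢ A

lemma cyl_mono {I J : Set ℝ} {A B : Set ℝ^n} (hIJ : I ⊆ J) (hAB : A ⊆ B) : cyl I A ⊆ cyl J B :=
  preimage_mono (prod_mono hIJ hAB)

lemma cyl_inter_cyl (I J : Set ℝ) (A B : Set ℝ^n) : cyl I A ∩ cyl J B = cyl (I ∩ J) (A ∩ B) := by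
  simp only [cyl, ← preimage_inter, prod_inter_prod]

lemma isOpen_cyl {I : Set ℝ} {A : Set ℝ^n} (hI : IsOpen I) (hA : IsOpen A) : IsOpen (cyl I A) :=
  (hI.prod hA).preimage (splitLast n).continuous

lemma isCompact_cyl {I : Set ℝ} {A : Set ℝ^n} (hI : IsCompact I) (hA : IsCompact A) :
    IsCompact (cyl I A) :=
  (splitLast n).toHomeomorph.isCompact_preimage.2 (hI.prod hA)

lemma isBounded_cyl {I : Set ℝ} {A : Set ℝ^n} (hI : Bornology.IsBounded I)
    (hA : Bornology.IsBounded A) : Bornology.IsBounded (cyl I A) := by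
  rw [cyl, ← (splitLast n).image_symm_eq_preimage]
  exact (splitLast n).symm.lipschitz.isBounded_image (hI.prod hA)

lemma measurableSet_cyl_univ {I : Set ℝ} (hI : MeasurableSet I) :
    MeasurableSet (cyl I (univ : Set ℝ^n)) :=
  (hI.prod MeasurableSet.univ).preimage (splitLast n).continuous.measurable

lemma volume_cyl (I : Set ℝ) (A : Set ℝ^n) : volume (cyl I A) = volume I * volume A := by
  rw [cyl, measurePreserving_splitLast.measure_preimage_emb measurableEmbedding_splitLast,
    Measure.volume_eq_prod, Measure.prod_prod]

section Perimeter

variable {W W' E : Set ℝ^n} {φ : ℝ^n → ℝ^n}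

lemma continuous_divg (hφ : ContDiff ℝ 1 φ) : Continuous (divg φ) :=
  continuous_finsetSum _ fun i _ => (EuclideanSpace.proj i).continuous.comp
    ((hφ.continuous_fderiv one_ne_zero).clm_apply continuous_const)

lemma support_divg_subset (φ : ℝ^n → ℝ^n) : Function.support (divg φ) ⊆ tsupport φ :=
  fun x hx => by_contra fun h => hx (by simp [divg, fderiv_of_notMem_tsupport ℝ h])

lemma HasCompactSupport.divg (hφ : HasCompactSupport φ) : HasCompactSupport (divg φ) :=
  hφ.mono' (support_divg_subset φ)

lemma divg_zero : divg (0 : ℝ^n → ℝ^n) = 0 := by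
  funext x
  simp [divg]

lemma divg_neg (φ : ℝ^n → ℝ^n) : divg (-φ) = -divg φ := by
  funext x
  simp [divg, fderiv_neg]

lemma divg_const_smul (c : ℝ) (φ : ℝ^n → ℝ^n) : divg (c • φ) = c • divg φ := by
  funext x
  simp [divg, fderiv_const_smul_field, Finset.mul_sum]

lemma testField_zero (W : Set ℝ^n) : TestField W 0 :=
  ⟨contDiff_const, HasCompactSupport.zero, by simp, by simp⟩

lemma TestField.neg (hφ : TestField W φ) : TestField W (-φ) :=
  ⟨hφ.1.neg, hφ.2.1.neg, (tsupport_neg φ).trans_subset hφ.2.2.1, fun x => by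
    simpa using hφ.2.2.2 x⟩

lemma TestField.mono (hφ : TestField W φ) (hW : W ⊆ W') : TestField W' φ :=
  ⟨hφ.1, hφ.2.1, hφ.2.2.1.trans hW, hφ.2.2.2⟩

def perimeterSet (E W : Set ℝ^n) : Set ℝ := {r | ∃ φ, TestField W φ ∧ r = ∫ x in E, divg φ x}

lemma Per_eq_sSup : Per E W = sSup (perimeterSet E W) := rfl

lemma perimeterSet_mono (hW : W ⊆ W') : perimeterSet E W ⊆ perimeterSet E W' :=
  fun _ ⟨φ, hφ, hr⟩ => ⟨φ, hφ.mono hW, hr⟩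

lemma zero_mem_perimeterSet : 0 ∈ perimeterSet E W :=
  ⟨0, testField_zero W, by simp [divg_zero]⟩

lemma Per_nonneg : 0 ≤ Per E W := by
  by_cases hb : BddAbove (perimeterSet E W)
  · exact le_csSup hb zero_mem_perimeterSet
  · -- `Per` takes the junk value `0` on an unbounded family of Gauss–Green integrals.
    rw [Per_eq_sSup, Real.sSup_of_not_bddAbove hb]

lemma abs_setIntegral_divg_le_Per (hb : BddAbove (perimeterSet E W)) (hφ : TestField W φ) :
    |∫ x in E, divg φ x| ≤ Per E W := by
  refine abs_le.2 ⟨?_, le_csSup hb ⟨φ, hφ, rfl⟩⟩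
  have : -∫ x in E, divg φ x ≤ Per E W := le_csSup hb ⟨-φ, hφ.neg, by simp [divg_neg, integral_neg]⟩
  linarith

lemma bddAbove_perimeterSet_and_mul_Per_le {m : ℕ} {E' W' : Set ℝ^m} {c : ℝ} (hc : 0 < c)
    (h : ∀ ρ ∈ perimeterSet E W, c * ρ ∈ perimeterSet E' W')
    (hb : BddAbove (perimeterSet E' W')) :
    BddAbove (perimeterSet E W) ∧ c * Per E W ≤ Per E' W' := by
  have hle : ∀ ρ ∈ perimeterSet E W, ρ ≤ Per E' W' / c :=
    fun ρ hρ => (le_div_iff₀' hc).2 (le_csSup hb (h ρ hρ))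
  exact ⟨⟨_, hle⟩, (le_div_iff₀' hc).1 (csSup_le ⟨0, zero_mem_perimeterSet⟩ hle)⟩

end Perimeter

section Slices

variable {φ : ℝ^(n + 1) → ℝ^(n + 1)}

def horizSlice (φ : ℝ^(n + 1) → ℝ^(n + 1)) (t : ℝ) (y : ℝ^n) : ℝ^n :=
  (splitLast n (φ ((splitLast n).symm (t, y)))).2

def vertComp (φ : ℝ^(n + 1) → ℝ^(n + 1)) (p : ℝ × ℝ^n) : ℝ :=
  φ ((splitLast n).symm p) (Fin.last n)

def vertDeriv (φ : ℝ^(n + 1) → ℝ^(n + 1)) (p : ℝ × ℝ^n) : ℝ :=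
  fderiv ℝ φ ((splitLast n).symm p) (EuclideanSpace.single (Fin.last n) 1) (Fin.last n)

lemma fderiv_horizSlice_apply (hφ : Differentiable ℝ φ) (t : ℝ) (y v : ℝ^n) :
    fderiv ℝ (horizSlice φ t) y v =
      (splitLast n (fderiv ℝ φ ((splitLast n).symm (t, y)) ((splitLast n).symm (0, v)))).2 := by
  let P := (ContinuousLinearMap.snd ℝ ℝ ℝ^n).comp (splitLast n : ℝ^(n + 1) →L[ℝ] ℝ × ℝ^n)
  have hline : HasFDerivAt (fun z : ℝ^n => (splitLast n).symm (t, z))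
      (((splitLast n).symm : ℝ × ℝ^n →L[ℝ] ℝ^(n + 1)).comp (ContinuousLinearMap.inr ℝ ℝ ℝ^n)) y :=
    ((splitLast n).symm : ℝ × ℝ^n →L[ℝ] ℝ^(n + 1)).hasFDerivAt.comp y
      (hasFDerivAt_prodMk_right t y)
  have h := P.hasFDerivAt.comp y ((hφ _).hasFDerivAt.comp y hline)
  rw [show horizSlice φ t = P ∘ φ ∘ fun z => (splitLast n).symm (t, z) from rfl, h.fderiv]
  rfl

lemma hasDerivAt_vertComp (hφ : Differentiable ℝ φ) (y : ℝ^n) (t : ℝ) :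
    HasDerivAt (fun s => vertComp φ (s, y)) (vertDeriv φ (t, y)) t := by
  have hline : HasDerivAt (fun s : ℝ => (splitLast n).symm (s, y))
      (EuclideanSpace.single (Fin.last n) 1) t := by
    rw [← splitLast_symm_one_zero]
    exact ((splitLast n).symm : ℝ × ℝ^n →L[ℝ] ℝ^(n + 1)).hasFDerivAt.comp_hasDerivAt t
      ((hasDerivAt_id t).prodMk (hasDerivAt_const t y))
  exact (EuclideanSpace.proj (Fin.last n) : ℝ^(n + 1) →L[ℝ] ℝ).hasFDerivAt.comp_hasDerivAt t
    ((hφ _).hasFDerivAt.comp_hasDerivAt t hline)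

lemma divg_splitLast_symm (hφ : Differentiable ℝ φ) (p : ℝ × ℝ^n) :
    divg φ ((splitLast n).symm p) = divg (horizSlice φ p.1) p.2 + vertDeriv φ p := by
  simp only [divg, Fin.sum_univ_castSucc, fderiv_horizSlice_apply hφ, splitLast_symm_zero_single,
    splitLast_snd_apply]
  rfl

lemma contDiff_horizSlice (hφ : ContDiff ℝ 1 φ) (t : ℝ) : ContDiff ℝ 1 (horizSlice φ t) :=
  ((ContinuousLinearMap.snd ℝ ℝ ℝ^n).comp (splitLast n : ℝ^(n + 1) →L[ℝ] ℝ × ℝ^n)).contDiff.comp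
    (hφ.comp (((splitLast n).symm : ℝ × ℝ^n →L[ℝ] ℝ^(n + 1)).contDiff.comp
      (contDiff_const.prodMk contDiff_id)))

lemma continuous_vertDeriv (hφ : ContDiff ℝ 1 φ) : Continuous (vertDeriv φ) :=
  (EuclideanSpace.proj (Fin.last n)).continuous.comp
    (((hφ.continuous_fderiv one_ne_zero).clm_apply continuous_const).comp
      (splitLast n).symm.continuous)

lemma continuous_vertComp (hφ : Continuous φ) : Continuous (vertComp φ) :=
  (EuclideanSpace.proj (Fin.last n)).continuous.comp (hφ.comp (splitLast n).symm.continuous)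

lemma HasCompactSupport.vertDeriv (hφ : HasCompactSupport φ) :
    HasCompactSupport (vertDeriv φ) :=
  ((hφ.fderiv_apply ℝ _).comp_left (map_zero (EuclideanSpace.proj (Fin.last n)))).comp_homeomorph
    (splitLast n).symm.toHomeomorph

lemma HasCompactSupport.vertComp (hφ : HasCompactSupport φ) : HasCompactSupport (vertComp φ) :=
  (hφ.comp_left (map_zero (EuclideanSpace.proj (Fin.last n)))).comp_homeomorph
    (splitLast n).symm.toHomeomorph

lemma abs_vertComp_le (hφ : ∀ x, ‖φ x‖ ≤ 1) (p : ℝ × ℝ^n) : |vertComp φ p| ≤ 1 :=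
  (Real.norm_eq_abs _).symm.trans_le ((PiLp.norm_apply_le _ _).trans (hφ _))

lemma integrable_vertComp_mk (hφ : Continuous φ) (hφc : HasCompactSupport φ) (t : ℝ) :
    Integrable fun y => vertComp φ (t, y) :=
  ((continuous_vertComp hφ).comp (Continuous.prodMk_right t)).integrable_of_hasCompactSupport
    (hφc.vertComp.comp_isClosedEmbedding (isClosedEmbedding_prodMk_right t))

lemma TestField.horizSlice {I : Set ℝ} {W : Set ℝ^n} (hφ : TestField (cyl I W) φ) (t : ℝ) :
    TestField W (horizSlice φ t) := by
  obtain ⟨hφ1, hφc, hφW, hφn⟩ := hφ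
  have hsub : tsupport (_root_.horizSlice φ t) ⊆
      (fun y => (splitLast n).symm (t, y)) ⁻¹' tsupport φ := by
    refine (tsupport_comp_subset (map_zero (ContinuousLinearMap.snd ℝ ℝ ℝ^n ∘L
      (splitLast n : ℝ^(n + 1) →L[ℝ] ℝ × ℝ^n))) _).trans ?_
    exact tsupport_comp_subset_preimage φ
      ((splitLast n).symm.continuous.comp (Continuous.prodMk_right t))
  refine ⟨contDiff_horizSlice hφ1 t, ?_, fun y hy => ?_, fun y => ?_⟩
  · exact ((hφc.comp_homeomorph (splitLast n).symm.toHomeomorph).comp_isClosedEmbedding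
      (isClosedEmbedding_prodMk_right t)).comp_left (map_zero (ContinuousLinearMap.snd ℝ ℝ ℝ^n ∘L
        (splitLast n : ℝ^(n + 1) →L[ℝ] ℝ × ℝ^n)))
  · exact (show t ∈ I ∧ y ∈ W by simpa [cyl] using hφW (hsub hy)).2
  · exact (norm_splitLast_snd_le _).trans (hφn _)

lemma horizSlice_eq_zero {I : Set ℝ} {W : Set ℝ^n} (hφ : tsupport φ ⊆ cyl I W) {t : ℝ}
    (ht : t ∉ I) : horizSlice φ t = 0 := by
  funext y
  have : (splitLast n).symm (t, y) ∉ tsupport φ := fun h => ht (by simpa [cyl] using (hφ h).1)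
  simp [horizSlice, image_eq_zero_of_notMem_tsupport this]

lemma setIntegral_cyl_divg (hφ : ContDiff ℝ 1 φ) (hφc : HasCompactSupport φ) (J : Set ℝ)
    (A : Set ℝ^n) :
    ∫ x in cyl J A, divg φ x =
      (∫ t in J, ∫ y in A, divg (horizSlice φ t) y) + ∫ y in A, ∫ t in J, vertDeriv φ (t, y) := by
  set μ := (volume.restrict J).prod (volume.restrict A)
  have hμ : μ ≤ volume := by
    simp only [μ, Measure.prod_restrict, ← Measure.volume_eq_prod]
    exact Measure.restrict_le_self
  have hH : Integrable (fun p => divg φ ((splitLast n).symm p)) μ :=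
    (((continuous_divg hφ).comp (splitLast n).symm.continuous).integrable_of_hasCompactSupport
      (hφc.divg.comp_homeomorph (splitLast n).symm.toHomeomorph)).mono_measure hμ
  have hV : Integrable (vertDeriv φ) μ :=
    ((continuous_vertDeriv hφ).integrable_of_hasCompactSupport hφc.vertDeriv).mono_measure hμ
  have hdecomp := divg_splitLast_symm (φ := φ) (hφ.differentiable one_ne_zero)
  have hS : Integrable (fun p : ℝ × ℝ^n => divg (horizSlice φ p.1) p.2) μ :=
    (hH.sub hV).congr (ae_of_all _ fun p => by simp [hdecomp])
  rw [cyl, setIntegral_preimage_splitLast, Measure.volume_eq_prod, ← Measure.prod_restrict]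
  simp_rw [hdecomp]
  rw [integral_add hS hV, integral_prod _ hS, integral_prod_symm _ hV]

lemma setIntegral_Ioo_vertDeriv (hφ : ContDiff ℝ 1 φ) {L : ℝ} (hL : 0 ≤ L) (y : ℝ^n) :
    ∫ t in Ioo (-L) L, vertDeriv φ (t, y) = vertComp φ (L, y) - vertComp φ (-L, y) := by
  rw [← integral_Ioc_eq_integral_Ioo, ← intervalIntegral.integral_of_le (by linarith)]
  exact intervalIntegral.integral_eq_sub_of_hasDerivAt
    (fun s _ => hasDerivAt_vertComp (hφ.differentiable one_ne_zero) y s)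
    (((continuous_vertDeriv hφ).comp (Continuous.prodMk_left y)).intervalIntegrable _ _)

lemma setIntegral_compl_Ioo_vertDeriv (hφ : ContDiff ℝ 1 φ) (hφc : HasCompactSupport φ) {L : ℝ}
    (hL : 0 ≤ L) (y : ℝ^n) :
    ∫ t in (Ioo (-L) L)ᶜ, vertDeriv φ (t, y) = -(vertComp φ (L, y) - vertComp φ (-L, y)) := by
  have hint : ∀ {f : ℝ × ℝ^n → ℝ}, Continuous f → HasCompactSupport f →
      Integrable fun t => f (t, y) := fun hf hfc =>
    (hf.comp (Continuous.prodMk_left y)).integrable_of_hasCompactSupport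
      (hfc.comp_isClosedEmbedding (isClosedEmbedding_prodMk_left y))
  have htotal : ∫ t, vertDeriv φ (t, y) = 0 :=
    integral_eq_zero_of_hasDerivAt_of_integrable
      (hasDerivAt_vertComp (hφ.differentiable one_ne_zero) y)
      (hint (continuous_vertDeriv hφ) hφc.vertDeriv)
      (hint (continuous_vertComp hφ.continuous) hφc.vertComp)
  rw [setIntegral_compl measurableSet_Ioo (hint (continuous_vertDeriv hφ) hφc.vertDeriv), htotal,
    setIntegral_Ioo_vertDeriv hφ hL, zero_sub]

end Slices

section Lift

def liftField (χ : ℝ → ℝ) (φ₀ : ℝ^n → ℝ^n) (x : ℝ^(n + 1)) : ℝ^(n + 1) :=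
  (splitLast n).symm (0, χ (splitLast n x).1 • φ₀ (splitLast n x).2)

variable {χ : ℝ → ℝ} {φ₀ : ℝ^n → ℝ^n}

lemma contDiff_liftField (hχ : ContDiff ℝ 1 χ) (hφ₀ : ContDiff ℝ 1 φ₀) :
    ContDiff ℝ 1 (liftField χ φ₀) :=
  ((splitLast n).symm : ℝ × ℝ^n →L[ℝ] ℝ^(n + 1)).contDiff.comp (contDiff_const.prodMk
    ((hχ.comp (contDiff_fst.comp (splitLast n).contDiff)).smul
      (hφ₀.comp (contDiff_snd.comp (splitLast n).contDiff))))

lemma divg_liftField (hχ : ContDiff ℝ 1 χ) (hφ₀ : ContDiff ℝ 1 φ₀) (p : ℝ × ℝ^n) :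
    divg (liftField χ φ₀) ((splitLast n).symm p) = χ p.1 * divg φ₀ p.2 := by
  have hd := (contDiff_liftField hχ hφ₀).differentiable one_ne_zero
  have hslice : horizSlice (liftField χ φ₀) p.1 = χ p.1 • φ₀ := by
    funext y
    simp [horizSlice, liftField]
  have hvert : vertDeriv (liftField χ φ₀) p = 0 :=
    (hasDerivAt_vertComp hd p.2 p.1).unique
      (by simpa [vertComp, liftField] using hasDerivAt_const p.1 (0 : ℝ))
  rw [divg_splitLast_symm hd, hslice, hvert, divg_const_smul, add_zero]
  rfl

lemma TestField.liftField {I : Set ℝ} {W : Set ℝ^n} (hχ : ContDiff ℝ 1 χ)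
    (hχc : HasCompactSupport χ) (hχI : tsupport χ ⊆ I) (hχ1 : ∀ t, |χ t| ≤ 1)
    (hφ₀ : TestField W φ₀) : TestField (cyl I W) (liftField χ φ₀) := by
  obtain ⟨hφ1, hφc, hφW, hφn⟩ := hφ₀
  have hsupp : Function.support (_root_.liftField χ φ₀) ⊆ cyl (tsupport χ) (tsupport φ₀) := by
    intro x hx
    refine ⟨subset_tsupport _ fun h => hx ?_, subset_tsupport _ fun h => hx ?_⟩ <;>
      simp only [_root_.liftField, h, zero_smul, smul_zero, Prod.mk_zero_zero, map_zero]
  have hK : IsCompact (cyl (tsupport χ) (tsupport φ₀)) := isCompact_cyl hχc hφc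
  refine ⟨contDiff_liftField hχ hφ1, .of_support_subset_isCompact hK hsupp,
    (closure_minimal hsupp hK.isClosed).trans (cyl_mono hχI hφW), fun x => ?_⟩
  rw [_root_.liftField, norm_splitLast_symm_zero, norm_smul, Real.norm_eq_abs]
  exact mul_le_one₀ (hχ1 _) (norm_nonneg _) (hφn _)

lemma setIntegral_cyl_divg_liftField (hχ : ContDiff ℝ 1 χ) (hφ₀ : ContDiff ℝ 1 φ₀) (J : Set ℝ)
    (A : Set ℝ^n) :
    ∫ x in cyl J A, divg (liftField χ φ₀) x = (∫ t in J, χ t) * ∫ y in A, divg φ₀ y := by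
  rw [cyl, setIntegral_preimage_splitLast]
  simp_rw [divg_liftField hχ hφ₀]
  rw [Measure.volume_eq_prod, ← Measure.prod_restrict, integral_prod_mul χ (divg φ₀)]

lemma two_mul_rIn_le_integral (χ : ContDiffBump (0 : ℝ)) : 2 * χ.rIn ≤ ∫ t, χ t :=
  calc 2 * χ.rIn = ∫ _ in closedBall (0 : ℝ) χ.rIn, (1 : ℝ) := by
        simp [χ.rIn_pos.le]
    _ = ∫ t in closedBall (0 : ℝ) χ.rIn, χ t :=
        setIntegral_congr_fun measurableSet_closedBall fun _ ht => (χ.one_of_mem_closedBall ht).symm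
    _ ≤ ∫ t, χ t := setIntegral_le_integral χ.integrable (ae_of_all _ fun _ => χ.nonneg)

/-- The witness is `liftField χ φ₀`, whose divergence `χ(t) div φ₀(y)` vanishes off the slab. -/
lemma mul_mem_perimeterSet_cyl (χ : ContDiffBump (0 : ℝ)) {a : ℝ} (ha : χ.rOut < a)
    {S : Set ℝ^(n + 1)} {A W : Set ℝ^n} (hS : cyl (Ioo (-a) a) univ ∩ S = cyl (Ioo (-a) a) A)
    {ρ : ℝ} (hρ : ρ ∈ perimeterSet A W) :
    (∫ t, χ t) * ρ ∈ perimeterSet S (cyl (Ioo (-a) a) W) := by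
  obtain ⟨φ₀, hφ₀, rfl⟩ := hρ
  have hχa : tsupport χ ⊆ Ioo (-a) a := by
    rw [χ.tsupport_eq]
    exact fun t ht => abs_lt.1 ((mem_closedBall_zero_iff.1 ht).trans_lt ha)
  have hχ : ContDiff ℝ 1 χ := χ.contDiff
  refine ⟨liftField χ φ₀, hφ₀.liftField hχ χ.hasCompactSupport hχa
    (fun t => abs_le.2 ⟨by linarith [χ.nonneg (x := t)], χ.le_one⟩), ?_⟩
  have hvanish : ∀ x ∉ cyl (Ioo (-a) a) univ, divg (liftField χ φ₀) x = 0 := by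
    intro x hx
    rw [← (splitLast n).symm_apply_apply x, divg_liftField hχ hφ₀.1,
      image_eq_zero_of_notMem_tsupport (fun h => hx ⟨hχa h, mem_univ _⟩), zero_mul]
  rw [← setIntegral_eq_integral_of_forall_compl_eq_zero hvanish (μ := volume.restrict S),
    Measure.restrict_restrict (measurableSet_cyl_univ measurableSet_Ioo), hS,
    setIntegral_cyl_divg_liftField hχ hφ₀.1, setIntegral_eq_integral_of_forall_compl_eq_zero
      fun t ht => image_eq_zero_of_notMem_tsupport fun h => ht (hχa h)]

lemma bddAbove_perimeterSet_and_two_mul_Per_le_cyl {r a : ℝ} (hr : 0 < r) (hra : r < a)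
    {S : Set ℝ^(n + 1)} {A W : Set ℝ^n} (hS : cyl (Ioo (-a) a) univ ∩ S = cyl (Ioo (-a) a) A)
    (hb : BddAbove (perimeterSet S (cyl (Ioo (-a) a) W))) :
    BddAbove (perimeterSet A W) ∧ 2 * r * Per A W ≤ Per S (cyl (Ioo (-a) a) W) := by
  let χ : ContDiffBump (0 : ℝ) := ⟨r, (r + a) / 2, hr, by linarith⟩
  have hχ : 2 * r ≤ ∫ t, χ t := two_mul_rIn_le_integral χ
  obtain ⟨hbA, hle⟩ := bddAbove_perimeterSet_and_mul_Per_le (by linarith)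
    (fun ρ hρ => mul_mem_perimeterSet_cyl χ (show (r + a) / 2 < a by linarith) hS hρ) hb
  exact ⟨hbA, (mul_le_mul_of_nonneg_right hχ Per_nonneg).trans hle⟩

end Lift

section Competitor

/-- The product competitor `F₀ × ℝ` cut off to `F₀ × I` and completed by `E₀ × Iᶜ`, so that it
differs from `E₀ × ℝ` only in `(E₀ Δ F₀) × I`. -/
def splice (I : Set ℝ) (E₀ F₀ : Set ℝ^n) : Set ℝ^(n + 1) := cyl I F₀ ∪ cyl Iᶜ E₀

lemma symmDiff_cyl_univ_splice (I : Set ℝ) (E₀ F₀ : Set ℝ^n) :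
    symmDiff (cyl univ E₀) (splice I E₀ F₀) = cyl I (symmDiff E₀ F₀) := by
  ext x
  simp only [splice, cyl, mem_symmDiff, mem_union, mem_preimage, mem_prod, mem_compl_iff, mem_univ]
  tauto

lemma cyl_univ_inter_splice (I : Set ℝ) (E₀ F₀ : Set ℝ^n) :
    cyl I univ ∩ splice I E₀ F₀ = cyl I F₀ := by
  ext x
  simp only [splice, cyl, mem_inter_iff, mem_union, mem_preimage, mem_prod, mem_compl_iff, mem_univ]
  tauto

lemma splice_sdiff_cyl_univ (I : Set ℝ) (E₀ F₀ : Set ℝ^n) :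
    splice I E₀ F₀ \ cyl I univ = cyl Iᶜ E₀ := by
  ext x
  simp only [splice, cyl, Set.mem_sdiff, mem_union, mem_preimage, mem_prod, mem_compl_iff, mem_univ]
  tauto

variable {E₀ F₀ W : Set ℝ^n} {L : ℝ} {φ : ℝ^(n + 1) → ℝ^(n + 1)}

lemma setIntegral_splice_divg (hφ : ContDiff ℝ 1 φ) (hφc : HasCompactSupport φ) (hL : 0 ≤ L)
    (E₀ F₀ : Set ℝ^n) :
    ∫ x in splice (Ioo (-L) L) E₀ F₀, divg φ x =
      (∫ t in Ioo (-L) L, ∫ y in F₀, divg (horizSlice φ t) y) +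
      (∫ t in (Ioo (-L) L)ᶜ, ∫ y in E₀, divg (horizSlice φ t) y) +
      ((∫ y in F₀, vertComp φ (L, y) - vertComp φ (-L, y)) -
        ∫ y in E₀, vertComp φ (L, y) - vertComp φ (-L, y)) := by
  have hF := setIntegral_cyl_divg hφ hφc (Ioo (-L) L) F₀
  have hE := setIntegral_cyl_divg hφ hφc (Ioo (-L) L)ᶜ E₀
  simp only [setIntegral_Ioo_vertDeriv hφ hL, setIntegral_compl_Ioo_vertDeriv hφ hφc hL,
    integral_neg] at hF hE
  rw [← integral_inter_add_sdiff (measurableSet_cyl_univ measurableSet_Ioo)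
    ((continuous_divg hφ).integrable_of_hasCompactSupport hφc.divg).integrableOn, inter_comm,
    cyl_univ_inter_splice, splice_sdiff_cyl_univ, hF, hE]
  ring

lemma setIntegral_splice_divg_le (hL : 0 ≤ L) (hE₀ : BddAbove (perimeterSet E₀ W))
    (hF₀ : BddAbove (perimeterSet F₀ W)) (hv : volume (symmDiff E₀ F₀) ≠ ⊤)
    (hφ : TestField (cyl (Ioo (-(L + 1)) (L + 1)) W) φ) :
    ∫ x in splice (Ioo (-L) L) E₀ F₀, divg φ x ≤
      2 * L * Per F₀ W + 2 * Per E₀ W + 4 * volume.real (symmDiff E₀ F₀) := by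
  obtain ⟨hφ1, hφc, hφW, hφn⟩ := id hφ
  have hslice : ∀ A, BddAbove (perimeterSet A W) → ∀ t, |∫ y in A, divg (horizSlice φ t) y| ≤
      Per A W := fun A hA t => abs_setIntegral_divg_le_Per hA (hφ.horizSlice t)
  have hout : ∀ A, ∀ t ∉ Ioo (-(L + 1)) (L + 1), ∫ y in A, divg (horizSlice φ t) y = 0 :=
    fun A t ht => by simp [horizSlice_eq_zero hφW ht, divg_zero]
  have hIJ : Ioo (-L) L ⊆ Ioo (-(L + 1)) (L + 1) := Ioo_subset_Ioo (by linarith) (by linarith)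
  have h1 : ∫ t in Ioo (-L) L, ∫ y in F₀, divg (horizSlice φ t) y ≤ Per F₀ W * (2 * L) := by
    have := setIntegral_le_mul_measureReal (μ := volume) (s := Ioo (-L) L) measurableSet_Ioo
      measure_Ioo_lt_top.ne (hslice F₀ hF₀) (hout F₀)
    rwa [inter_eq_left.2 hIJ, Real.volume_real_Ioo, max_eq_left (by linarith), sub_neg_eq_add,
      ← two_mul] at this
  have h2 : ∫ t in (Ioo (-L) L)ᶜ, ∫ y in E₀, divg (horizSlice φ t) y ≤ Per E₀ W * 2 := by
    have := setIntegral_le_mul_measureReal (μ := volume) (s := (Ioo (-L) L)ᶜ)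
      measurableSet_Ioo.compl measure_Ioo_lt_top.ne (hslice E₀ hE₀) (hout E₀)
    rwa [inter_comm, ← Set.sdiff_eq, measureReal_sdiff hIJ measurableSet_Ioo measure_Ioo_lt_top.ne,
      Real.volume_real_Ioo, Real.volume_real_Ioo, max_eq_left (by linarith),
      max_eq_left (by linarith), show L + 1 - -(L + 1) - (L - -L) = 2 by ring] at this
  have h3 : (∫ y in F₀, vertComp φ (L, y) - vertComp φ (-L, y)) -
      ∫ y in E₀, vertComp φ (L, y) - vertComp φ (-L, y) ≤ 2 * 2 * volume.real (symmDiff E₀ F₀) := by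
    rw [symmDiff_comm]
    exact (le_abs_self _).trans (abs_setIntegral_sub_setIntegral_le
      ((integrable_vertComp_mk hφ1.continuous hφc L).sub
        (integrable_vertComp_mk hφ1.continuous hφc (-L)))
      (fun y => by linarith [abs_sub (vertComp φ (L, y)) (vertComp φ (-L, y)),
        abs_vertComp_le hφn (L, y), abs_vertComp_le hφn (-L, y)])
      (by rwa [symmDiff_comm]))
  rw [setIntegral_splice_divg hφ1 hφc hL]
  linarith

lemma Per_splice_le (hL : 0 < L) (hE₀ : BddAbove (perimeterSet E₀ W))
    (hv : volume (symmDiff E₀ F₀) ≠ ⊤) :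
    Per (splice (Ioo (-L) L) E₀ F₀) (cyl (Ioo (-(L + 1)) (L + 1)) W) ≤
      2 * L * Per F₀ W + 2 * Per E₀ W + 4 * volume.real (symmDiff E₀ F₀) := by
  by_cases hb : BddAbove (perimeterSet (splice (Ioo (-L) L) E₀ F₀) (cyl (Ioo (-(L + 1)) (L + 1)) W))
  · have hF₀ : BddAbove (perimeterSet F₀ W) :=
      (bddAbove_perimeterSet_and_two_mul_Per_le_cyl (half_pos hL) (half_lt_self hL)
        (cyl_univ_inter_splice _ E₀ F₀)
        (hb.mono (perimeterSet_mono (cyl_mono (Ioo_subset_Ioo (by linarith) (by linarith))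
          subset_rfl)))).1
    exact csSup_le ⟨0, zero_mem_perimeterSet⟩ fun ρ ⟨φ, hφ, hρ⟩ =>
      hρ ▸ setIntegral_splice_divg_le hL.le hE₀ hF₀ hv hφ
  · -- `Per` takes the junk value `0` on an unbounded family of Gauss–Green integrals.
    rw [Per_eq_sSup, Real.sSup_of_not_bddAbove hb]
    have := mul_nonneg hL.le (Per_nonneg (E := F₀) (W := W))
    linarith [Per_nonneg (E := E₀) (W := W), measureReal_nonneg (μ := volume) (s := symmDiff E₀ F₀)]

end Competitor

end

theorem cylindrical_almost_minimizing_general {n : ℕ} (C : ℝ)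
    (E : Set (EuclideanSpace ℝ (Fin (n + 1)))) (E₀ : Set (EuclideanSpace ℝ (Fin n)))
    (hE : LocallyFinitePerimeter E)
    (hcyl : E = {x : EuclideanSpace ℝ (Fin (n + 1)) | WithLp.toLp 2 (fun i : Fin n => x i.castSucc) ∈ E₀})
    (hmin : AlmostMinimizing C E) :
    AlmostMinimizing C E₀ := by
  obtain rfl : E = cyl univ E₀ := hcyl.trans (by ext x; simp [cyl]; rfl)
  intro W hWo hWb F₀ ⟨K, hK, hEF, hKW⟩
  have hv : volume (symmDiff E₀ F₀) ≠ ⊤ := ((measure_mono hEF).trans_lt hK.measure_lt_top).ne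
  rw [← measureReal_def]
  refine le_of_forall_one_le_mul_le_mul_add (K := Per E₀ W + 2 * volume.real (symmDiff E₀ F₀))
    fun L hL => ?_
  set W' := cyl (Ioo (-(L + 1)) (L + 1)) W
  have hW'o : IsOpen W' := isOpen_cyl isOpen_Ioo hWo
  have hW'b : Bornology.IsBounded W' := isBounded_cyl (Metric.isBounded_Ioo _ _) hWb
  obtain ⟨hE₀, hlower⟩ := bddAbove_perimeterSet_and_two_mul_Per_le_cyl (r := L) (by linarith)
    (by linarith) (by rw [cyl_inter_cyl, univ_inter, inter_univ]) (hE W' hW'o hW'b)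
  have hcomp := hmin W' hW'o hW'b (splice (Ioo (-L) L) E₀ F₀)
    ⟨cyl (Icc (-L) L) K, isCompact_cyl isCompact_Icc hK,
      (symmDiff_cyl_univ_splice _ E₀ F₀).trans_subset (cyl_mono Ioo_subset_Icc_self hEF),
      cyl_mono (Icc_subset_Ioo (by linarith) (by linarith)) hKW⟩
  rw [symmDiff_cyl_univ_splice, volume_cyl, ENNReal.toReal_mul, ← measureReal_def,
    ← measureReal_def, Real.volume_real_Ioo, max_eq_left (by linarith : (0 : ℝ) ≤ L - -L)] at hcomp
  have hupper := Per_splice_le (L := L) (by linarith) hE₀ hv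
  linarith

/-- Lemma on cylindrical almost minimizers.
If `E = E₀ × ℝ ⊂ ℝ^{n+1}` has locally finite perimeter and its boundary is `C`-almost
minimizing, then the boundary of the cross-section `E₀ ⊂ ℝⁿ` is `C`-almost minimizing. -/
theorem cylindrical_almost_minimizing {n : ℕ} (C : ℝ) (hC : 0 ≤ C)
    (E : Set (EuclideanSpace ℝ (Fin (n + 1)))) (E₀ : Set (EuclideanSpace ℝ (Fin n)))
    (hE : LocallyFinitePerimeter E) (hE₀ : LocallyFinitePerimeter E₀)
    (hcyl : E = {x : EuclideanSpace ℝ (Fin (n + 1)) | WithLp.toLp 2 (fun i : Fin n => x i.castSucc) ∈ E₀})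
    (hmin : AlmostMinimizing C E) :
    AlmostMinimizing C E₀ :=
  cylindrical_almost_minimizing_general C E E₀ hE hcyl hmin
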